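/- arXiv:1705.03561 — 2 statements merged into one kernel-verified Lean document; each statement's English description precedes it below -/
import Mathlib

section
/- Let H be a 3-uniform linear hypergraph on n vertices containing no Berge cycle of length 4. Then for every vertex v of H, ∑_{x ∈ N₁(v)} 2·d(x) ≤ n + 12·d(v). -/
open Finset

/-- Degree of a vertex: number of hyperedges containing it. -/
def hyperDeg {V : Type*} [DecidableEq V] (H : Finset (Finset V)) (v : V) : ℕ :=
  (H.filter fun e => v ∈ e).card

/-- First neighborhood: vertices other than `v` sharing a hyperedge with `v`. -/
def N1 {V : Type*} [DecidableEq V] (H : Finset (Finset V)) (v : V) : Finset V :=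
  ((H.filter fun e => v ∈ e).biUnion id).erase v

/-- Second neighborhood: vertices outside `N1 H v ∪ {v}` lying in a hyperedge
that meets `N1 H v`. -/
def N2 {V : Type*} [DecidableEq V] (H : Finset (Finset V)) (v : V) : Finset V :=
  ((H.filter fun e => (e ∩ N1 H v).Nonempty).biUnion id) \ insert v (N1 H v)

/-- A hypergraph is linear if any two distinct hyperedges share at most one vertex. -/
def IsLinear {V : Type*} [DecidableEq V] (H : Finset (Finset V)) : Prop :=
  ∀ e ∈ H, ∀ f ∈ H, e ≠ f → (e ∩ f).card ≤ 1

/-- A Berge cycle of length `k`: `k` distinct vertices and `k` distinct hyperedges,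
with `v i, v (i+1) ∈ h i` cyclically. -/
def HasBergeCycle {V : Type*} (H : Finset (Finset V)) (k : ℕ) : Prop :=
  ∃ (v : ZMod k → V) (h : ZMod k → Finset V),
    Function.Injective v ∧ Function.Injective h ∧
    ∀ i, h i ∈ H ∧ v i ∈ h i ∧ v (i + 1) ∈ h i


/-!
For `x ∈ N₁(v)` linearity leaves at most one edge through both `x` and `v`, so
`∑ 2 d(x) ≤ 2 |N₁(v)| + ∑ₓ 2 d'(x)`, where `d'(x)` counts the edges through `x` avoiding `v`.
Since every edge has three vertices, `∑ₓ 2 d'(x) = ∑ᵤ s(u)`, where `s(u)` counts the pairs `(x, e)`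
with `x ∈ N₁(v)` and `e` an edge avoiding `v` that contains `x` and `u ≠ x`. Two such pairs with
different edges put their `x`'s into one edge through `v`, or else they close a Berge `C₄` through
`v`; hence `s(u) ≤ 2`, and `∑ᵤ s(u) ≤ n + |D|` with `D = {u | s(u) = 2}`. A vertex of `D` either
lies in `N₁(v)`, or is the third vertex of an edge avoiding `v` with two vertices in `N₁(v)` (there
are at most `|N₁(v)|` such edges), or is the apex of a Berge path of length two joining the two
neighbours of `v` in some edge through `v` (at most two apexes per ordered pair, again by the
absence of `C₄`). With `|N₁(v)| ≤ 2 d(v)` this gives `|D| ≤ 8 d(v)`.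
-/

theorem hasBergeCycle_four {V : Type*} {H : Finset (Finset V)} {a b c d : V}
    {p q r s : Finset V} (hp : p ∈ H) (hq : q ∈ H) (hr : r ∈ H) (hs : s ∈ H)
    (hab : a ≠ b) (hac : a ≠ c) (had : a ≠ d) (hbc : b ≠ c) (hbd : b ≠ d) (hcd : c ≠ d)
    (hpq : p ≠ q) (hpr : p ≠ r) (hps : p ≠ s) (hqr : q ≠ r) (hqs : q ≠ s) (hrs : r ≠ s)
    (hap : a ∈ p) (hbp : b ∈ p) (hbq : b ∈ q) (hcq : c ∈ q) (hcr : c ∈ r) (hdr : d ∈ r)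
    (hds : d ∈ s) (has : a ∈ s) :
    HasBergeCycle H 4 := by
  refine ⟨![a, b, c, d], ![p, q, r, s], ?_, ?_, fun i => ?_⟩
  · intro i j h
    fin_cases i <;> fin_cases j <;> first | rfl | simp_all
  · intro i j h
    fin_cases i <;> fin_cases j <;> first | rfl | simp_all
  · fin_cases i
    exacts [⟨hp, hap, hbp⟩, ⟨hq, hbq, hcq⟩, ⟨hr, hcr, hdr⟩, ⟨hs, hds, has⟩]

theorem sum_le_card_add_card_filter_two_le {α : Type*} [Fintype α] (f : α → ℕ)
    (hf : ∀ a, f a ≤ 2) : ∑ a, f a ≤ Fintype.card α + #{a | 2 ≤ f a} := by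
  calc ∑ a, f a ≤ ∑ a, (1 + if 2 ≤ f a then 1 else 0) :=
        sum_le_sum fun a _ => by have := hf a; split_ifs <;> omega
    _ = Fintype.card α + #{a | 2 ≤ f a} := by
        rw [sum_add_distrib, sum_boole, sum_const, card_univ, smul_eq_mul, mul_one, Nat.cast_id]

section

variable {V : Type*} [DecidableEq V] {H : Finset (Finset V)}

theorem IsLinear.eq_of_mem (hLin : IsLinear H) {e f : Finset V} (he : e ∈ H) (hf : f ∈ H)
    {a b : V} (hab : a ≠ b) (hae : a ∈ e) (hbe : b ∈ e) (haf : a ∈ f) (hbf : b ∈ f) :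
    e = f := by
  by_contra hne
  exact (hLin e he f hf hne).not_gt
    (one_lt_card_iff.2 ⟨a, b, mem_inter.2 ⟨hae, haf⟩, mem_inter.2 ⟨hbe, hbf⟩, hab⟩)

theorem mem_N1 {v x : V} : x ∈ N1 H v ↔ x ≠ v ∧ ∃ e ∈ H, v ∈ e ∧ x ∈ e := by
  simp only [N1, mem_erase, mem_biUnion, mem_filter, id]
  tauto

theorem card_N1_le (hUnif : ∀ e ∈ H, #e = 3) (v : V) : #(N1 H v) ≤ 2 * hyperDeg H v := by
  have hsub : N1 H v ⊆ {e ∈ H | v ∈ e}.biUnion (·.erase v) := by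
    intro x hx
    obtain ⟨hxv, e, he, hve, hxe⟩ := mem_N1.1 hx
    exact mem_biUnion.2 ⟨e, mem_filter.2 ⟨he, hve⟩, mem_erase.2 ⟨hxv, hxe⟩⟩
  refine (card_le_card hsub).trans <|
    (card_biUnion_le_card_mul _ _ 2 fun e he => ?_).trans_eq (mul_comm _ _)
  rw [mem_filter] at he
  rw [card_erase_of_mem he.2, hUnif e he.1]

def hyperDegAvoiding (H : Finset (Finset V)) (v x : V) : ℕ :=
  #{e ∈ H | x ∈ e ∧ v ∉ e}

theorem hyperDeg_le_one_add_hyperDegAvoiding (hLin : IsLinear H) {v x : V} (hxv : x ≠ v) :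
    hyperDeg H x ≤ 1 + hyperDegAvoiding H v x := by
  have hthrough : #{e ∈ H | x ∈ e ∧ v ∈ e} ≤ 1 :=
    card_le_one.2 fun e he f hf => by
      rw [mem_filter] at he hf
      exact hLin.eq_of_mem he.1 hf.1 hxv he.2.1 he.2.2 hf.2.1 hf.2.2
  have hsplit := card_filter_add_card_filter_not (s := {e ∈ H | x ∈ e}) (p := fun e => v ∈ e)
  simp only [filter_filter] at hsplit
  rw [hyperDeg, ← hsplit, hyperDegAvoiding]
  omega

def incidencesAvoiding (H : Finset (Finset V)) (v : V) : Finset (V × Finset V) :=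
  {q ∈ N1 H v ×ˢ H | q.1 ∈ q.2 ∧ v ∉ q.2}

def stepsTo (H : Finset (Finset V)) (v u : V) : Finset (V × Finset V) :=
  {q ∈ incidencesAvoiding H v | u ∈ q.2.erase q.1}

theorem mem_stepsTo {v u x : V} {e : Finset V} :
    (x, e) ∈ stepsTo H v u ↔ x ∈ N1 H v ∧ e ∈ H ∧ x ∈ e ∧ v ∉ e ∧ u ≠ x ∧ u ∈ e := by
  simp only [stepsTo, incidencesAvoiding, mem_filter, mem_product, mem_erase]
  tauto

theorem card_incidencesAvoiding (v : V) :
    #(incidencesAvoiding H v) = ∑ x ∈ N1 H v, hyperDegAvoiding H v x := by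
  rw [incidencesAvoiding, card_filter, sum_product]
  simp only [hyperDegAvoiding, card_filter]

theorem sum_card_stepsTo [Fintype V] (hUnif : ∀ e ∈ H, #e = 3) (v : V) :
    ∑ u, #(stepsTo H v u) = 2 * ∑ x ∈ N1 H v, hyperDegAvoiding H v x := by
  rw [← card_incidencesAvoiding, mul_comm, ← smul_eq_mul, ← sum_const]
  refine (sum_card_bipartiteAbove_eq_sum_card_bipartiteBelow
    (r := fun u (q : V × Finset V) => u ∈ q.2.erase q.1)).trans (sum_congr rfl fun q hq => ?_)
  simp only [incidencesAvoiding, mem_filter, mem_product] at hq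
  rw [bipartiteBelow, filter_univ_mem, card_erase_of_mem hq.2.1, hUnif q.2 hq.1.2]

theorem fst_ne_of_mem_stepsTo (hLin : IsLinear H) {v u x y : V} {e f : Finset V}
    (hx : (x, e) ∈ stepsTo H v u) (hy : (y, f) ∈ stepsTo H v u) (hne : (x, e) ≠ (y, f)) :
    x ≠ y := by
  rintro rfl
  obtain ⟨-, he, hxe, -, hux, hue⟩ := mem_stepsTo.1 hx
  obtain ⟨-, hf, hxf, -, -, huf⟩ := mem_stepsTo.1 hy
  exact hne (congrArg _ (hLin.eq_of_mem he hf hux.symm hxe hue hxf huf))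

/-- Otherwise `v, f₁, x₁, e₁, u, e₂, x₂, f₂` is a Berge `C₄`. -/
theorem eq_of_mem_stepsTo (hLin : IsLinear H) (hNoC4 : ¬HasBergeCycle H 4)
    {v u x₁ x₂ : V} {e₁ e₂ f₁ f₂ : Finset V} (h₁ : (x₁, e₁) ∈ stepsTo H v u)
    (h₂ : (x₂, e₂) ∈ stepsTo H v u) (he : e₁ ≠ e₂) (hf₁ : f₁ ∈ H) (hf₂ : f₂ ∈ H)
    (hvf₁ : v ∈ f₁) (hvf₂ : v ∈ f₂) (hxf₁ : x₁ ∈ f₁) (hxf₂ : x₂ ∈ f₂) : f₁ = f₂ := by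
  have hx := fst_ne_of_mem_stepsTo hLin h₁ h₂ (fun h => he (congrArg Prod.snd h))
  obtain ⟨-, he₁, hxe₁, hve₁, hux₁, hue₁⟩ := mem_stepsTo.1 h₁
  obtain ⟨-, he₂, hxe₂, hve₂, hux₂, hue₂⟩ := mem_stepsTo.1 h₂
  by_contra hf
  exact hNoC4 (hasBergeCycle_four hf₁ he₁ he₂ hf₂
    (ne_of_mem_of_not_mem hxe₁ hve₁).symm (ne_of_mem_of_not_mem hue₁ hve₁).symm
    (ne_of_mem_of_not_mem hxe₂ hve₂).symm hux₁.symm hx hux₂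
    (ne_of_mem_of_not_mem' hvf₁ hve₁) (ne_of_mem_of_not_mem' hvf₁ hve₂) hf he
    (ne_of_mem_of_not_mem' hvf₂ hve₁).symm (ne_of_mem_of_not_mem' hvf₂ hve₂).symm
    hvf₁ hxf₁ hxe₁ hue₁ hue₂ hxe₂ hxf₂ hvf₂)

theorem card_stepsTo_le_two (hUnif : ∀ e ∈ H, #e = 3) (hLin : IsLinear H)
    (hNoC4 : ¬HasBergeCycle H 4) (v u : V) : #(stepsTo H v u) ≤ 2 := by
  by_contra! h
  obtain ⟨⟨x₁, e₁⟩, h₁, ⟨x₂, e₂⟩, h₂, ⟨x₃, e₃⟩, h₃, h₁₂, h₁₃, h₂₃⟩ := two_lt_card.1 h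
  have hx₁₂ := fst_ne_of_mem_stepsTo hLin h₁ h₂ h₁₂
  have hx₁₃ := fst_ne_of_mem_stepsTo hLin h₁ h₃ h₁₃
  have hx₂₃ := fst_ne_of_mem_stepsTo hLin h₂ h₃ h₂₃
  obtain ⟨hx₁, he₁, hxe₁, -, hux₁, -⟩ := mem_stepsTo.1 h₁
  obtain ⟨hx₂, -, hxe₂, -, hux₂, -⟩ := mem_stepsTo.1 h₂
  obtain ⟨hx₃, -, hxe₃, -, hux₃, hue₃⟩ := mem_stepsTo.1 h₃
  obtain ⟨hx₁v, f₁, hf₁, hvf₁, hxf₁⟩ := mem_N1.1 hx₁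
  obtain ⟨hx₂v, f₂, hf₂, hvf₂, hxf₂⟩ := mem_N1.1 hx₂
  obtain ⟨hx₃v, f₃, hf₃, hvf₃, hxf₃⟩ := mem_N1.1 hx₃
  have hf : f₁ = f₂ ∧ f₁ = f₃ := by
    by_cases he₁₂ : e₁ = e₂
    · subst he₁₂
      have he₁₃ : e₁ ≠ e₃ := by
        rintro rfl
        exact (hUnif e₁ he₁).not_gt (three_lt_card_iff.2 ⟨x₁, x₂, x₃, u, hxe₁, hxe₂, hxe₃, hue₃,
          hx₁₂, hx₁₃, hux₁.symm, hx₂₃, hux₂.symm, hux₃.symm⟩)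
      have hf₁₃ := eq_of_mem_stepsTo hLin hNoC4 h₁ h₃ he₁₃ hf₁ hf₃ hvf₁ hvf₃ hxf₁ hxf₃
      have hf₂₃ := eq_of_mem_stepsTo hLin hNoC4 h₂ h₃ he₁₃ hf₂ hf₃ hvf₂ hvf₃ hxf₂ hxf₃
      exact ⟨hf₁₃.trans hf₂₃.symm, hf₁₃⟩
    · have hf₁₂ := eq_of_mem_stepsTo hLin hNoC4 h₁ h₂ he₁₂ hf₁ hf₂ hvf₁ hvf₂ hxf₁ hxf₂
      refine ⟨hf₁₂, ?_⟩
      by_cases he₁₃ : e₁ = e₃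
      · subst he₁₃
        exact hf₁₂.trans (eq_of_mem_stepsTo hLin hNoC4 h₂ h₃ (Ne.symm he₁₂) hf₂ hf₃ hvf₂ hvf₃
          hxf₂ hxf₃)
      · exact eq_of_mem_stepsTo hLin hNoC4 h₁ h₃ he₁₃ hf₁ hf₃ hvf₁ hvf₃ hxf₁ hxf₃
  obtain ⟨rfl, rfl⟩ := hf
  exact (hUnif f₁ hf₁).not_gt (three_lt_card_iff.2 ⟨v, x₁, x₂, x₃, hvf₁, hxf₁, hxf₂, hxf₃,
    hx₁v.symm, hx₂v.symm, hx₃v.symm, hx₁₂, hx₁₃, hx₂₃⟩)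

def crossEdges (H : Finset (Finset V)) (v : V) : Finset (Finset V) :=
  {e ∈ H | v ∉ e ∧ 2 ≤ #(N1 H v ∩ e)}

theorem card_filter_mem_crossEdges_le_two (hUnif : ∀ e ∈ H, #e = 3) (hLin : IsLinear H)
    (hNoC4 : ¬HasBergeCycle H 4) (v x : V) : #{e ∈ crossEdges H v | x ∈ e} ≤ 2 := by
  have hsub : {e ∈ crossEdges H v | x ∈ e} ⊆ (stepsTo H v x).image Prod.snd := by
    intro e he
    simp only [crossEdges, mem_filter] at he
    obtain ⟨⟨he, hve, hcard⟩, hxe⟩ := he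
    obtain ⟨y, hy, hyx⟩ := exists_mem_ne hcard x
    rw [mem_inter] at hy
    exact mem_image.2 ⟨(y, e), mem_stepsTo.2 ⟨hy.1, he, hy.2, hve, hyx.symm, hxe⟩, rfl⟩
  exact (card_le_card hsub).trans (card_image_le.trans (card_stepsTo_le_two hUnif hLin hNoC4 v x))

theorem card_crossEdges_le (hUnif : ∀ e ∈ H, #e = 3) (hLin : IsLinear H)
    (hNoC4 : ¬HasBergeCycle H 4) (v : V) : #(crossEdges H v) ≤ #(N1 H v) := by
  have hlow : #(crossEdges H v) • 2 ≤ ∑ e ∈ crossEdges H v, #(N1 H v ∩ e) :=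
    card_nsmul_le_sum _ _ _ fun e he => (mem_filter.1 he).2.2
  have hup := sum_card_inter_le (s := N1 H v) (B := crossEdges H v) (n := 2) fun x _ =>
    card_filter_mem_crossEdges_le_two hUnif hLin hNoC4 v x
  rw [smul_eq_mul] at hlow
  omega

def crossApexes (H : Finset (Finset V)) (v : V) : Finset V :=
  (crossEdges H v).biUnion (· \ N1 H v)

theorem card_crossApexes_le (hUnif : ∀ e ∈ H, #e = 3) (hLin : IsLinear H)
    (hNoC4 : ¬HasBergeCycle H 4) (v : V) : #(crossApexes H v) ≤ #(N1 H v) := by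
  refine (card_biUnion_le_card_mul _ _ 1 fun e he => ?_).trans
    ((mul_one _).trans_le (card_crossEdges_le hUnif hLin hNoC4 v))
  simp only [crossEdges, mem_filter] at he
  have := card_sdiff_add_card_inter e (N1 H v)
  rw [inter_comm, hUnif e he.1] at this
  omega

/-- The Berge path `a, ea, u, eb, b` of length two. -/
structure IsCherry (H : Finset (Finset V)) (a b u : V) (ea eb : Finset V) : Prop where
  left_mem : ea ∈ H
  right_mem : eb ∈ H
  ne : ea ≠ eb
  mem_left : a ∈ ea
  apex_mem_left : u ∈ ea
  mem_right : b ∈ eb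
  apex_mem_right : u ∈ eb

/-- Two cherries with distinct apexes over `a, b` and no common edge close up to the Berge `C₄`
`a, ea, u, eb, b, eb', u', ea'`. -/
theorem IsCherry.eq_or_eq (hUnif : ∀ e ∈ H, #e = 3) (hNoC4 : ¬HasBergeCycle H 4)
    {a b u u' : V} {ea eb ea' eb' : Finset V} (h : IsCherry H a b u ea eb)
    (h' : IsCherry H a b u' ea' eb') (hab : a ≠ b) (hau : a ≠ u) (hau' : a ≠ u')
    (hbu : b ≠ u) (hbu' : b ≠ u') (huu' : u ≠ u') : ea = ea' ∨ eb = eb' := by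
  by_contra! hne
  have hcross : ea ≠ eb' := by
    rintro rfl
    exact (hUnif ea h.left_mem).not_gt (three_lt_card_iff.2 ⟨a, u, b, u', h.mem_left,
      h.apex_mem_left, h'.mem_right, h'.apex_mem_right, hau, hab, hau', hbu.symm, huu', hbu'⟩)
  have hcross' : eb ≠ ea' := by
    rintro rfl
    exact (hUnif eb h.right_mem).not_gt (three_lt_card_iff.2 ⟨b, u, a, u', h.mem_right,
      h.apex_mem_right, h'.mem_left, h'.apex_mem_left, hbu, hab.symm, hbu', hau.symm, huu', hau'⟩)
  exact hNoC4 (hasBergeCycle_four h.left_mem h.right_mem h'.right_mem h'.left_mem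
    hau hab hau' hbu.symm huu' hbu' h.ne hcross hne.1 hne.2 hcross' h'.ne.symm
    h.mem_left h.apex_mem_left h.apex_mem_right h.mem_right h'.mem_right h'.apex_mem_right
    h'.apex_mem_left h'.mem_left)

variable [Fintype V]

open Classical in
noncomputable def cherryApexes (H : Finset (Finset V)) (a b : V) : Finset V :=
  {u | u ≠ a ∧ u ≠ b ∧ ∃ ea eb, IsCherry H a b u ea eb}

theorem card_cherryApexes_le_two (hUnif : ∀ e ∈ H, #e = 3) (hNoC4 : ¬HasBergeCycle H 4)
    {a b : V} (hab : a ≠ b) : #(cherryApexes H a b) ≤ 2 := by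
  by_contra! h
  obtain ⟨u₁, h₁, u₂, h₂, u₃, h₃, h₁₂, h₁₃, h₂₃⟩ := two_lt_card.1 h
  simp only [cherryApexes, mem_filter, mem_univ, true_and] at h₁ h₂ h₃
  obtain ⟨hu₁a, hu₁b, ea₁, eb₁, c₁⟩ := h₁
  obtain ⟨hu₂a, hu₂b, ea₂, eb₂, c₂⟩ := h₂
  obtain ⟨hu₃a, hu₃b, ea₃, eb₃, c₃⟩ := h₃
  have p₁₂ := c₁.eq_or_eq hUnif hNoC4 c₂ hab hu₁a.symm hu₂a.symm hu₁b.symm hu₂b.symm h₁₂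
  have p₁₃ := c₁.eq_or_eq hUnif hNoC4 c₃ hab hu₁a.symm hu₃a.symm hu₁b.symm hu₃b.symm h₁₃
  have p₂₃ := c₂.eq_or_eq hUnif hNoC4 c₃ hab hu₂a.symm hu₃a.symm hu₂b.symm hu₃b.symm h₂₃
  -- Of the three coincidences, two on the same side meet in one edge holding four vertices.
  have hA : ea₁ = ea₂ → ea₁ = ea₃ → False := by
    rintro rfl rfl
    exact (hUnif ea₁ c₁.left_mem).not_gt (three_lt_card_iff.2 ⟨a, u₁, u₂, u₃, c₁.mem_left,
      c₁.apex_mem_left, c₂.apex_mem_left, c₃.apex_mem_left, hu₁a.symm, hu₂a.symm, hu₃a.symm,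
      h₁₂, h₁₃, h₂₃⟩)
  have hB : eb₁ = eb₂ → eb₁ = eb₃ → False := by
    rintro rfl rfl
    exact (hUnif eb₁ c₁.right_mem).not_gt (three_lt_card_iff.2 ⟨b, u₁, u₂, u₃, c₁.mem_right,
      c₁.apex_mem_right, c₂.apex_mem_right, c₃.apex_mem_right, hu₁b.symm, hu₂b.symm, hu₃b.symm,
      h₁₂, h₁₃, h₂₃⟩)
  rcases p₁₂ with h₁₂ | h₁₂ <;> rcases p₁₃ with h₁₃ | h₁₃ <;> rcases p₂₃ with h₂₃ | h₂₃ <;> grind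

noncomputable def cherryApexesAt (H : Finset (Finset V)) (v : V) : Finset V :=
  {f ∈ H | v ∈ f}.biUnion fun f => (f.erase v).offDiag.biUnion fun p => cherryApexes H p.1 p.2

theorem card_cherryApexesAt_le (hUnif : ∀ e ∈ H, #e = 3) (hNoC4 : ¬HasBergeCycle H 4) (v : V) :
    #(cherryApexesAt H v) ≤ 4 * hyperDeg H v := by
  refine (card_biUnion_le_card_mul _ _ 4 fun f hf => ?_).trans_eq (mul_comm _ _)
  rw [mem_filter] at hf
  have hcard : #(f.erase v) = 2 := by rw [card_erase_of_mem hf.2, hUnif f hf.1]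
  refine (card_biUnion_le_card_mul _ _ 2 fun p hp =>
    card_cherryApexes_le_two hUnif hNoC4 (mem_offDiag.1 hp).2.2).trans ?_
  rw [offDiag_card, hcard]

theorem filter_two_le_card_stepsTo_subset (hLin : IsLinear H) (hNoC4 : ¬HasBergeCycle H 4)
    (v : V) : ({u | 2 ≤ #(stepsTo H v u)} : Finset V) ⊆
      N1 H v ∪ crossApexes H v ∪ cherryApexesAt H v := by
  intro u hu
  rw [mem_filter] at hu
  obtain ⟨⟨x₁, e₁⟩, h₁, ⟨x₂, e₂⟩, h₂, hne⟩ := one_lt_card.1 hu.2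
  have hx := fst_ne_of_mem_stepsTo hLin h₁ h₂ hne
  obtain ⟨hx₁, he₁, hxe₁, hve₁, hux₁, hue₁⟩ := mem_stepsTo.1 h₁
  obtain ⟨hx₂, he₂, hxe₂, -, hux₂, hue₂⟩ := mem_stepsTo.1 h₂
  simp only [mem_union]
  by_cases hN : u ∈ N1 H v
  · exact Or.inl (Or.inl hN)
  by_cases he : e₁ = e₂
  · subst he
    refine Or.inl (Or.inr (mem_biUnion.2
      ⟨e₁, mem_filter.2 ⟨he₁, hve₁, ?_⟩, mem_sdiff.2 ⟨hue₁, hN⟩⟩))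
    exact one_lt_card.2 ⟨x₁, mem_inter.2 ⟨hx₁, hxe₁⟩, x₂, mem_inter.2 ⟨hx₂, hxe₂⟩, hx⟩
  · obtain ⟨hx₁v, f, hf, hvf, hxf₁⟩ := mem_N1.1 hx₁
    obtain ⟨hx₂v, f₂, hf₂, hvf₂, hxf₂⟩ := mem_N1.1 hx₂
    obtain rfl := eq_of_mem_stepsTo hLin hNoC4 h₁ h₂ he hf hf₂ hvf hvf₂ hxf₁ hxf₂
    refine Or.inr (mem_biUnion.2 ⟨f, mem_filter.2 ⟨hf, hvf⟩, mem_biUnion.2 ⟨(x₁, x₂),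
      mem_offDiag.2 ⟨mem_erase.2 ⟨hx₁v, hxf₁⟩, mem_erase.2 ⟨hx₂v, hxf₂⟩, hx⟩, ?_⟩⟩)
    simp only [cherryApexes, mem_filter, mem_univ, true_and]
    exact ⟨hux₁, hux₂, e₁, e₂, ⟨he₁, he₂, he, hxe₁, hue₁, hxe₂, hue₂⟩⟩

theorem card_filter_two_le_card_stepsTo_le (hUnif : ∀ e ∈ H, #e = 3) (hLin : IsLinear H)
    (hNoC4 : ¬HasBergeCycle H 4) (v : V) :
    #{u | 2 ≤ #(stepsTo H v u)} ≤ 2 * #(N1 H v) + 4 * hyperDeg H v := by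
  have hcross := card_crossApexes_le hUnif hLin hNoC4 v
  have hcherry := card_cherryApexesAt_le hUnif hNoC4 v
  have hsub := card_le_card (filter_two_le_card_stepsTo_subset hLin hNoC4 v)
  have hunion₁ := card_union_le (N1 H v ∪ crossApexes H v) (cherryApexesAt H v)
  have hunion₂ := card_union_le (N1 H v) (crossApexes H v)
  omega

theorem sum_two_mul_hyperDeg_le (hUnif : ∀ e ∈ H, #e = 3) (hLin : IsLinear H) (v : V) :
    ∑ x ∈ N1 H v, 2 * hyperDeg H x ≤ 2 * #(N1 H v) + ∑ u, #(stepsTo H v u) := by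
  calc ∑ x ∈ N1 H v, 2 * hyperDeg H x ≤ ∑ x ∈ N1 H v, (2 + 2 * hyperDegAvoiding H v x) :=
        sum_le_sum fun x hx => by
          have := hyperDeg_le_one_add_hyperDegAvoiding hLin (mem_N1.1 hx).1
          omega
    _ = 2 * #(N1 H v) + ∑ u, #(stepsTo H v u) := by
        rw [sum_card_stepsTo hUnif, sum_add_distrib, sum_const, smul_eq_mul, mul_sum, mul_comm]

end

theorem stmt_4 {V : Type*} [Fintype V] [DecidableEq V]
    (H : Finset (Finset V))
    (hUnif : ∀ e ∈ H, e.card = 3)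
    (hLin : IsLinear H)
    (hNoC4 : ¬ HasBergeCycle H 4)
    (v : V) :
    ∑ x ∈ N1 H v, 2 * hyperDeg H x ≤ Fintype.card V + 12 * hyperDeg H v := by
  have hdeg := sum_two_mul_hyperDeg_le hUnif hLin v
  have hsteps := sum_le_card_add_card_filter_two_le _ (card_stepsTo_le_two hUnif hLin hNoC4 v)
  have hfew := card_filter_two_le_card_stepsTo_le hUnif hLin hNoC4 v
  have hN1 := card_N1_le hUnif v
  omega
end

section
/- Every 3-uniform linear hypergraph on n vertices containing no Berge cycle of length 4 has at most (1/6)·n·√(n+9) + n/2 hyperedges. -/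
open Finset

/-!
Count *cherries* `u, e, x, f, w`: Berge paths of length two with `u ∉ f` and `w ∉ e`. In a linear
hypergraph any two edges through `x` meet only in `x`, so a vertex of degree `d` is the center of
exactly `4 d (d - 1)` cherries. Conversely, if there is no Berge `C₄`, two cherries from `u` to `w`
with different centers share an edge, so there are at most two centers from `u` to `w`, and at most
one unless `(u, w)` or `(w, u)` is an *opposite pair*: a vertex `z` of an edge `{z, x, x'}` together
with the center of a cherry from `x` to `x'`. There are at most `12 |H|` opposite pairs, whence
`4 ∑ d (d - 1) ≤ n² + 24 |H|`. With `∑ d = 3 |H|` and Cauchy–Schwarz this gives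
`36 |H|² ≤ n³ + 36 |H| n`, which is the claimed bound.
-/

section Cherries

variable {V : Type*} {H : Finset (Finset V)}

theorem hasBergeCycle_four_s7 {v₀ v₁ v₂ v₃ : V} {e₀ e₁ e₂ e₃ : Finset V}
    (hv : [v₀, v₁, v₂, v₃].Nodup) (he : [e₀, e₁, e₂, e₃].Nodup)
    (h₀ : e₀ ∈ H ∧ v₀ ∈ e₀ ∧ v₁ ∈ e₀) (h₁ : e₁ ∈ H ∧ v₁ ∈ e₁ ∧ v₂ ∈ e₁)
    (h₂ : e₂ ∈ H ∧ v₂ ∈ e₂ ∧ v₃ ∈ e₂) (h₃ : e₃ ∈ H ∧ v₃ ∈ e₃ ∧ v₀ ∈ e₃) :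
    HasBergeCycle H 4 := by
  simp only [List.nodup_cons, List.mem_cons, List.not_mem_nil, List.nodup_nil, not_or] at hv he
  refine ⟨![v₀, v₁, v₂, v₃], ![e₀, e₁, e₂, e₃], ?_, ?_, ?_⟩
  · intro i j h
    fin_cases i <;> fin_cases j <;> first | rfl | simp_all [eq_comm]
  · intro i j h
    fin_cases i <;> fin_cases j <;> first | rfl | simp_all [eq_comm]
  · intro i
    fin_cases i
    exacts [h₀, h₁, h₂, h₃]

theorem false_of_four_mem {s : Finset V} (hs : #s ≤ 3) {a b c d : V}
    (ha : a ∈ s) (hb : b ∈ s) (hc : c ∈ s) (hd : d ∈ s) (hv : [a, b, c, d].Nodup) : False := by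
  classical
  have := card_le_card (show [a, b, c, d].toFinset ⊆ s by simp [insert_subset_iff, *])
  rw [List.toFinset_card_of_nodup hv] at this
  simp only [List.length_cons, List.length_nil] at this
  omega

structure IsCherry_s7 (H : Finset (Finset V)) (u x w : V) (e f : Finset V) : Prop where
  left_edge_mem : e ∈ H
  right_edge_mem : f ∈ H
  start_mem : u ∈ e
  center_mem_left : x ∈ e
  center_mem_right : x ∈ f
  end_mem : w ∈ f
  start_notMem : u ∉ f
  end_notMem : w ∉ e

namespace IsCherry_s7

variable {u x w x' : V} {e f e' f' : Finset V}

theorem symm (c : IsCherry_s7 H u x w e f) : IsCherry_s7 H w x u f e :=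
  ⟨c.2, c.1, c.6, c.5, c.4, c.3, c.8, c.7⟩

theorem start_ne_center (c : IsCherry_s7 H u x w e f) : u ≠ x :=
  fun h => c.start_notMem (h ▸ c.center_mem_right)

theorem start_ne_end (c : IsCherry_s7 H u x w e f) : u ≠ w :=
  fun h => c.start_notMem (h ▸ c.end_mem)

theorem center_ne_end (c : IsCherry_s7 H u x w e f) : x ≠ w :=
  c.symm.start_ne_center.symm

theorem left_eq_or_right_eq (hC4 : ¬ HasBergeCycle H 4) (c : IsCherry_s7 H u x w e f)
    (c' : IsCherry_s7 H u x' w e' f') (hx : x ≠ x') : e = e' ∨ f = f' := by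
  by_contra! ⟨he, hf⟩
  refine hC4 (hasBergeCycle_four_s7 (v₀ := u) (v₁ := x) (v₂ := w) (v₃ := x')
    (e₀ := e) (e₁ := f) (e₂ := f') (e₃ := e') ?_ ?_
    ⟨c.1, c.3, c.4⟩ ⟨c.2, c.5, c.6⟩ ⟨c'.2, c'.6, c'.5⟩ ⟨c'.1, c'.4, c'.3⟩)
  · simp [c.start_ne_center, c.start_ne_end, c'.start_ne_center, c.center_ne_end, hx,
      c'.center_ne_end.symm]
  · have hne : ∀ {g g' : Finset V}, u ∈ g → u ∉ g' → g ≠ g' := fun hg hg' h => hg' (h ▸ hg)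
    simp [hne c.start_mem c.start_notMem, hne c.start_mem c'.start_notMem, he, hf,
      (hne c'.start_mem c.start_notMem).symm, (hne c'.start_mem c'.start_notMem).symm]

end IsCherry_s7

section Centers

variable [Fintype V]

open Classical in
noncomputable def cherryCenters (H : Finset (Finset V)) (u w : V) : Finset V :=
  {x | ∃ e f, IsCherry_s7 H u x w e f}

theorem mem_cherryCenters {u x w : V} :
    x ∈ cherryCenters H u w ↔ ∃ e f, IsCherry_s7 H u x w e f := by
  simp [cherryCenters]

theorem card_cherryCenters_le_two (hH : ∀ e ∈ H, #e ≤ 3) (hC4 : ¬ HasBergeCycle H 4)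
    (u w : V) : #(cherryCenters H u w) ≤ 2 := by
  by_contra! h
  obtain ⟨x₁, x₂, x₃, h₁, h₂, h₃, h₁₂, h₁₃, h₂₃⟩ := two_lt_card_iff.1 h
  obtain ⟨e₁, f₁, c₁⟩ := mem_cherryCenters.1 h₁
  obtain ⟨e₂, f₂, c₂⟩ := mem_cherryCenters.1 h₂
  obtain ⟨e₃, f₃, c₃⟩ := mem_cherryCenters.1 h₃
  have hc₁₂ := c₁.left_eq_or_right_eq hC4 c₂ h₁₂
  have hc₁₃ := c₁.left_eq_or_right_eq hC4 c₃ h₁₃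
  have hc₂₃ := c₂.left_eq_or_right_eq hC4 c₃ h₂₃
  have hshared : (e₁ = e₂ ∧ e₁ = e₃) ∨ (f₁ = f₂ ∧ f₁ = f₃) := by grind
  rcases hshared with ⟨rfl, rfl⟩ | ⟨rfl, rfl⟩
  · refine false_of_four_mem (hH e₁ c₁.left_edge_mem) c₁.start_mem c₁.center_mem_left
      c₂.center_mem_left c₃.center_mem_left ?_
    simp [c₁.start_ne_center, c₂.start_ne_center, c₃.start_ne_center, *]
  · refine false_of_four_mem (hH f₁ c₁.right_edge_mem) c₁.end_mem c₁.center_mem_right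
      c₂.center_mem_right c₃.center_mem_right ?_
    simp [c₁.center_ne_end.symm, c₂.center_ne_end.symm, c₃.center_ne_end.symm, *]

end Centers

section Linear

variable [DecidableEq V]

theorem IsLinear.eq_of_mem_of_mem (hH : IsLinear H) {e f : Finset V} (he : e ∈ H) (hf : f ∈ H)
    {a b : V} (hab : a ≠ b) (hae : a ∈ e) (hbe : b ∈ e) (haf : a ∈ f) (hbf : b ∈ f) :
    e = f := by
  by_contra hne
  have := card_le_card (show {a, b} ⊆ e ∩ f by simp [insert_subset_iff, *])
  rw [card_pair hab] at this
  exact absurd (hH e he f hf hne) (by omega)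

theorem IsCherry_s7.of_mem_of_mem (hH : IsLinear H) {u x w : V} {e f : Finset V} (he : e ∈ H)
    (hf : f ∈ H) (hef : e ≠ f) (hxe : x ∈ e) (hxf : x ∈ f) (hue : u ∈ e) (hux : u ≠ x)
    (hwf : w ∈ f) (hwx : w ≠ x) : IsCherry_s7 H u x w e f where
  left_edge_mem := he
  right_edge_mem := hf
  start_mem := hue
  center_mem_left := hxe
  center_mem_right := hxf
  end_mem := hwf
  start_notMem huf := hef (hH.eq_of_mem_of_mem he hf hux hue hxe huf hxf)
  end_notMem hwe := hef (hH.eq_of_mem_of_mem he hf hwx hwe hxe hwf hxf)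

variable [Fintype V]

noncomputable def oppositePairs (H : Finset (Finset V)) : Finset (V × V) :=
  H.biUnion fun e => e.offDiag.biUnion fun p => (e \ {p.1, p.2}) ×ˢ cherryCenters H p.1 p.2

theorem card_oppositePairs_le (hH : ∀ e ∈ H, #e ≤ 3) (hC4 : ¬ HasBergeCycle H 4) :
    #(oppositePairs H) ≤ 12 * #H := by
  have hsdiff : ∀ e ∈ H, ∀ p ∈ e.offDiag, #(e \ {p.1, p.2}) ≤ 1 := by
    intro e he p hp
    obtain ⟨h₁, h₂, hne⟩ := mem_offDiag.1 hp
    rw [card_sdiff_of_subset (by simp [insert_subset_iff, h₁, h₂]), card_pair hne]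
    have := hH e he
    omega
  have hoffDiag : ∀ e ∈ H, #e.offDiag ≤ 6 := by
    intro e he
    rw [offDiag_card]
    have := hH e he
    interval_cases #e <;> simp
  calc #(oppositePairs H)
      ≤ ∑ e ∈ H, ∑ p ∈ e.offDiag, #(e \ {p.1, p.2}) * #(cherryCenters H p.1 p.2) := by
        refine card_biUnion_le.trans (sum_le_sum fun e _ => card_biUnion_le.trans ?_)
        simp only [card_product, le_refl]
    _ ≤ ∑ e ∈ H, ∑ p ∈ e.offDiag, 1 * 2 := by
        gcongr with e he p hp
        exacts [hsdiff e he p hp, card_cherryCenters_le_two hH hC4 _ _]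
    _ ≤ ∑ e ∈ H, 12 := by
        gcongr with e he
        rw [sum_const, smul_eq_mul]
        have := hoffDiag e he
        omega
    _ = 12 * #H := by rw [sum_const, smul_eq_mul, mul_comm]

theorem mem_oppositePairs_of_isCherry (hH : IsLinear H) {u x x' w : V} {e f f' : Finset V}
    (c : IsCherry_s7 H u x w e f) (c' : IsCherry_s7 H u x' w e f') (hx : x ≠ x') :
    (u, w) ∈ oppositePairs H := by
  have hxf' : x ∉ f' := fun h => c.end_notMem <|
    hH.eq_of_mem_of_mem c'.right_edge_mem c.left_edge_mem hx h c'.center_mem_right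
      c.center_mem_left c'.center_mem_left ▸ c'.end_mem
  have hx'f : x' ∉ f := fun h => c.end_notMem <|
    hH.eq_of_mem_of_mem c.right_edge_mem c.left_edge_mem hx c.center_mem_right h
      c.center_mem_left c'.center_mem_left ▸ c.end_mem
  have hw : w ∈ cherryCenters H x x' :=
    mem_cherryCenters.2 ⟨f, f', c.right_edge_mem, c'.right_edge_mem, c.center_mem_right,
      c.end_mem, c'.end_mem, c'.center_mem_right, hxf', hx'f⟩
  simp only [oppositePairs, mem_biUnion, mem_offDiag, mem_product, mem_sdiff, mem_insert,
    mem_singleton, not_or]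
  exact ⟨e, c.left_edge_mem, (x, x'), ⟨c.center_mem_left, c'.center_mem_left, hx⟩,
    ⟨c.start_mem, c.start_ne_center, c'.start_ne_center⟩, hw⟩

theorem card_cherryCenters_le_one (hH : IsLinear H) (hC4 : ¬ HasBergeCycle H 4) {u w : V}
    (huw : (u, w) ∉ oppositePairs H) (hwu : (w, u) ∉ oppositePairs H) :
    #(cherryCenters H u w) ≤ 1 := by
  refine card_le_one.2 fun x hx x' hx' => by_contra fun hne => ?_
  obtain ⟨e, f, c⟩ := mem_cherryCenters.1 hx
  obtain ⟨e', f', c'⟩ := mem_cherryCenters.1 hx'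
  rcases c.left_eq_or_right_eq hC4 c' hne with rfl | rfl
  · exact huw (mem_oppositePairs_of_isCherry hH c c' hne)
  · exact hwu (mem_oppositePairs_of_isCherry hH c.symm c'.symm hne)

theorem sum_card_cherryCenters_le (hH₃ : ∀ e ∈ H, #e ≤ 3) (hH : IsLinear H)
    (hC4 : ¬ HasBergeCycle H 4) :
    ∑ p : V × V, #(cherryCenters H p.1 p.2) ≤ Fintype.card V ^ 2 + 24 * #H := by
  set S := oppositePairs H ∪ (oppositePairs H).image Prod.swap
  have hS : #S ≤ 24 * #H := by
    have h := card_oppositePairs_le hH₃ hC4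
    calc #S ≤ #(oppositePairs H) + #((oppositePairs H).image Prod.swap) := card_union_le _ _
      _ ≤ 12 * #H + 12 * #H := add_le_add h (card_image_le.trans h)
      _ = 24 * #H := by ring
  calc ∑ p : V × V, #(cherryCenters H p.1 p.2)
      ≤ ∑ p : V × V, (1 + if p ∈ S then 1 else 0) := by
        gcongr with p
        split_ifs with hp
        · exact card_cherryCenters_le_two hH₃ hC4 _ _
        · refine (card_cherryCenters_le_one hH hC4 (fun h => hp (mem_union_left _ h))
            (fun h => hp (mem_union_right _ (mem_image.2 ⟨_, h, rfl⟩)))).trans (by simp)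
    _ = Fintype.card V ^ 2 + #S := by simp [sum_add_distrib, sq]
    _ ≤ Fintype.card V ^ 2 + 24 * #H := by omega

noncomputable def cherryEnds (H : Finset (Finset V)) (x : V) : Finset (V × V) :=
  {p | x ∈ cherryCenters H p.1 p.2}

theorem sum_card_cherryEnds :
    ∑ x, #(cherryEnds H x) = ∑ p : V × V, #(cherryCenters H p.1 p.2) := by
  simpa [bipartiteAbove, bipartiteBelow, cherryEnds] using
    sum_card_bipartiteAbove_eq_sum_card_bipartiteBelow (s := univ) (t := univ)
      (r := fun x (p : V × V) => x ∈ cherryCenters H p.1 p.2)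

theorem mul_hyperDeg_le_card_cherryEnds {k : ℕ} (hk : ∀ e ∈ H, #e = k) (hH : IsLinear H)
    (x : V) :
    (k - 1) ^ 2 * (hyperDeg H x * hyperDeg H x - hyperDeg H x) ≤ #(cherryEnds H x) := by
  set star := H.filter (x ∈ ·)
  have hsub : star.offDiag.biUnion (fun q => q.1.erase x ×ˢ q.2.erase x) ⊆ cherryEnds H x := by
    intro p hp
    simp only [star, mem_biUnion, mem_offDiag, mem_filter, mem_product, mem_erase] at hp
    obtain ⟨⟨e, f⟩, ⟨⟨he, hxe⟩, ⟨hf, hxf⟩, hef⟩, ⟨hux, hue⟩, ⟨hwx, hwf⟩⟩ := hp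
    exact mem_filter.2 ⟨mem_univ _, mem_cherryCenters.2
      ⟨e, f, .of_mem_of_mem hH he hf hef hxe hxf hue hux hwf hwx⟩⟩
  have hdisj : (star.offDiag : Set (Finset V × Finset V)).PairwiseDisjoint
      fun q => q.1.erase x ×ˢ q.2.erase x := by
    rintro ⟨e, f⟩ hq ⟨e', f'⟩ hq' hne
    simp only [star, coe_offDiag, Set.mem_offDiag, mem_coe, mem_filter] at hq hq'
    refine disjoint_left.2 fun ⟨u, w⟩ hp hp' => hne ?_
    simp only [mem_product, mem_erase] at hp hp'
    rw [hH.eq_of_mem_of_mem hq.1.1 hq'.1.1 hp.1.1 hp.1.2 hq.1.2 hp'.1.2 hq'.1.2,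
      hH.eq_of_mem_of_mem hq.2.1.1 hq'.2.1.1 hp.2.1 hp.2.2 hq.2.1.2 hp'.2.2 hq'.2.1.2]
  have hcard : ∀ q ∈ star.offDiag, #(q.1.erase x ×ˢ q.2.erase x) = (k - 1) ^ 2 := by
    intro q hq
    simp only [star, mem_offDiag, mem_filter] at hq
    rw [card_product, card_erase_of_mem hq.1.2, card_erase_of_mem hq.2.1.2, hk _ hq.1.1,
      hk _ hq.2.1.1, sq]
  calc (k - 1) ^ 2 * (hyperDeg H x * hyperDeg H x - hyperDeg H x)
      = ∑ q ∈ star.offDiag, #(q.1.erase x ×ˢ q.2.erase x) := by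
        rw [sum_congr rfl hcard, sum_const, offDiag_card, smul_eq_mul, mul_comm]
        rfl
    _ = #(star.offDiag.biUnion fun q => q.1.erase x ×ˢ q.2.erase x) := (card_biUnion hdisj).symm
    _ ≤ #(cherryEnds H x) := card_le_card hsub

theorem sum_hyperDeg {k : ℕ} (hk : ∀ e ∈ H, #e = k) : ∑ x, hyperDeg H x = k * #H := by
  have hcount : ∑ x, hyperDeg H x = ∑ e ∈ H, #e := by
    simpa [bipartiteAbove, bipartiteBelow, hyperDeg] using
      sum_card_bipartiteAbove_eq_sum_card_bipartiteBelow (s := univ) (t := H) (r := (· ∈ ·))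
  rw [hcount, sum_congr rfl hk, sum_const, smul_eq_mul, mul_comm]

theorem four_mul_sum_hyperDeg_sq_le (hH₃ : ∀ e ∈ H, #e = 3) (hH : IsLinear H)
    (hC4 : ¬ HasBergeCycle H 4) :
    4 * ∑ x, hyperDeg H x ^ 2 ≤ Fintype.card V ^ 2 + 36 * #H := by
  have hcherries : ∑ x, 4 * (hyperDeg H x * hyperDeg H x - hyperDeg H x) ≤
      Fintype.card V ^ 2 + 24 * #H :=
    calc _ ≤ ∑ x, #(cherryEnds H x) :=
          sum_le_sum fun x _ => mul_hyperDeg_le_card_cherryEnds hH₃ hH x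
      _ = ∑ p : V × V, #(cherryCenters H p.1 p.2) := sum_card_cherryEnds
      _ ≤ _ := sum_card_cherryCenters_le (fun e he => (hH₃ e he).le) hH hC4
  have hsplit : 4 * ∑ x, hyperDeg H x ^ 2 =
      ∑ x, 4 * (hyperDeg H x * hyperDeg H x - hyperDeg H x) + 4 * ∑ x, hyperDeg H x := by
    rw [mul_sum, mul_sum, ← sum_add_distrib]
    refine sum_congr rfl fun x _ => ?_
    have := Nat.le_mul_self (hyperDeg H x)
    rw [sq]
    omega
  have := sum_hyperDeg hH₃
  omega

end Linear

end Cherries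

theorem le_mul_sqrt_add_half_of_sq_le {m n : ℝ} (hn : 0 ≤ n)
    (h : 36 * m ^ 2 ≤ n ^ 3 + 36 * m * n) : m ≤ 1 / 6 * n * √(n + 9) + n / 2 := by
  have hsq : (6 * m - 3 * n) ^ 2 ≤ (n * √(n + 9)) ^ 2 := by
    rw [mul_pow, Real.sq_sqrt (by linarith)]
    nlinarith
  have := le_of_sq_le_sq hsq (by positivity)
  linarith

theorem stmt_7 {V : Type*} [Fintype V] [DecidableEq V]
    (H : Finset (Finset V))
    (hUnif : ∀ e ∈ H, e.card = 3)
    (hLin : IsLinear H)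
    (hNoC4 : ¬ HasBergeCycle H 4) :
    (H.card : ℝ) ≤ (1 / 6) * (Fintype.card V : ℝ) * Real.sqrt ((Fintype.card V : ℝ) + 9)
      + (Fintype.card V : ℝ) / 2 := by
  have hCS := sq_sum_le_card_mul_sum_sq (s := univ) (f := hyperDeg H)
  rw [sum_hyperDeg hUnif, card_univ] at hCS
  have hsq := four_mul_sum_hyperDeg_sq_le hUnif hLin hNoC4
  have : 36 * #H ^ 2 ≤ Fintype.card V ^ 3 + 36 * #H * Fintype.card V := by nlinarith
  exact le_mul_sqrt_add_half_of_sq_le (Nat.cast_nonneg _) (by exact_mod_cast this)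
end
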